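/- Let K > 1 and let (a_{n,m})_{n,m≥0} be a square-summable doubly-indexed family of complex numbers. Define c_{n,m} = a_{n,m} - a_{n,m+2}/K - a_{n+2,m}/K + a_{n+2,m+2}/K². Then (∑_{n,m≥0} |c_{n,m}|²)^{1/2} ≥ (1 - 1/K)² (∑_{n,m≥0} |a_{n,m}|²)^{1/2}. -/
import Mathlib

open Function
open scoped ENNReal

noncomputable def myToLp (f : ℕ × ℕ → ℂ) (hf : Summable fun p => ‖f p‖ ^ 2) :
    lp (fun _ : ℕ × ℕ => ℂ) 2 :=
  ⟨f, memℓp_gen (by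
    have h2 : ((2 : ℝ≥0∞)).toReal = ((2 : ℕ) : ℝ) := by norm_num
    rw [h2]
    simpa [Real.rpow_natCast] using hf)⟩

lemma myToLp_coe (f : ℕ × ℕ → ℂ) (hf : Summable fun p => ‖f p‖ ^ 2) :
    ⇑(myToLp f hf) = f := rfl

lemma my_summable (f : lp (fun _ : ℕ × ℕ => ℂ) 2) :
    Summable fun p => ‖f p‖ ^ 2 := by
  have := (lp.memℓp f).summable (p := 2) (by norm_num)
  have h2 : ((2 : ℝ≥0∞)).toReal = ((2 : ℕ) : ℝ) := by norm_num
  rw [h2] at this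
  simpa [Real.rpow_natCast] using this

lemma my_norm (f : lp (fun _ : ℕ × ℕ => ℂ) 2) :
    ‖f‖ = Real.sqrt (∑' p, ‖f p‖ ^ 2) := by
  rw [lp.norm_eq_tsum_rpow (by norm_num) f, Real.sqrt_eq_rpow]
  have h2 : ((2 : ℝ≥0∞)).toReal = ((2 : ℕ) : ℝ) := by norm_num
  rw [h2]
  norm_num [Real.rpow_natCast]

lemma shift_tsum_le (f : ℕ × ℕ → ℝ) (hf : ∀ p, 0 ≤ f p) (σ : ℕ × ℕ → ℕ × ℕ)
    (hσ : Injective σ) (h : Summable f) : ∑' p, f (σ p) ≤ ∑' p, f p :=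
  Summable.tsum_le_tsum_of_inj σ hσ (fun c _ => hf c) (fun _ => le_rfl)
    (h.comp_injective hσ) h

/-- norm of shifted lp element is ≤ norm. -/
lemma shift_norm_le (f : lp (fun _ : ℕ × ℕ => ℂ) 2) (σ : ℕ × ℕ → ℕ × ℕ)
    (hσ : Injective σ) :
    ‖myToLp (fun p => f (σ p)) ((my_summable f).comp_injective hσ)‖ ≤ ‖f‖ := by
  rw [my_norm, my_norm, myToLp_coe]
  exact Real.sqrt_le_sqrt
    (shift_tsum_le (fun p => ‖f p‖ ^ 2) (fun p => by positivity) σ hσ (my_summable f))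

/-- key one-step bound. -/
lemma one_step (K : ℝ) (hK : 1 < K) (f : lp (fun _ : ℕ × ℕ => ℂ) 2)
    (σ : ℕ × ℕ → ℕ × ℕ) (hσ : Injective σ) :
    ‖f - ((K : ℂ))⁻¹ • myToLp (fun p => f (σ p)) ((my_summable f).comp_injective hσ)‖
      ≥ (1 - 1 / K) * ‖f‖ := by
  set g := myToLp (fun p => f (σ p)) ((my_summable f).comp_injective hσ)
  have h1 : ‖f - ((K : ℂ))⁻¹ • g‖ ≥ ‖f‖ - ‖((K : ℂ))⁻¹ • g‖ :=
    norm_sub_norm_le _ _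
  have h2 : ‖((K : ℂ))⁻¹ • g‖ = K⁻¹ * ‖g‖ := by
    rw [norm_smul]
    congr 1
    rw [norm_inv, Complex.norm_real, Real.norm_of_nonneg (by linarith)]
  have h3 : ‖g‖ ≤ ‖f‖ := shift_norm_le f σ hσ
  have hKpos : (0:ℝ) < K := by linarith
  have : K⁻¹ * ‖g‖ ≤ K⁻¹ * ‖f‖ := by
    apply mul_le_mul_of_nonneg_left h3 (by positivity)
  rw [h2] at h1
  have hfin : ‖f‖ - K⁻¹ * ‖f‖ = (1 - 1/K) * ‖f‖ := by ring
  linarith [h1]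

/-- lower bound for the transformed coefficients. -/
theorem radial_riesz_lower_bound (K : ℝ) (hK : 1 < K) (a : ℕ → ℕ → ℂ)
    (ha : Summable fun p : ℕ × ℕ => ‖a p.1 p.2‖ ^ 2) :
    Real.sqrt (∑' p : ℕ × ℕ,
        ‖a p.1 p.2 - a p.1 (p.2 + 2) / (K : ℂ) - a (p.1 + 2) p.2 / (K : ℂ)
          + a (p.1 + 2) (p.2 + 2) / (K : ℂ) ^ 2‖ ^ 2)
      ≥ (1 - 1 / K) ^ 2 * Real.sqrt (∑' p : ℕ × ℕ, ‖a p.1 p.2‖ ^ 2) := by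
  have hKpos : (0:ℝ) < K := by linarith
  have hKne : (K : ℂ) ≠ 0 := by
    simp only [ne_eq, Complex.ofReal_eq_zero]; linarith
  set A : lp (fun _ : ℕ × ℕ => ℂ) 2 := myToLp (fun p => a p.1 p.2) ha with hA
  -- shift maps
  have hσ2 : Injective (fun p : ℕ × ℕ => (p.1, p.2 + 2)) := by
    intro p q h
    simpa [Prod.ext_iff] using h
  have hσ1 : Injective (fun p : ℕ × ℕ => (p.1 + 2, p.2)) := by
    intro p q h
    simpa [Prod.ext_iff] using h
  set B := A - ((K : ℂ))⁻¹ • myToLp (fun p => A ((fun p : ℕ × ℕ => (p.1, p.2 + 2)) p))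
      ((my_summable A).comp_injective hσ2) with hB
  have hBnorm : ‖B‖ ≥ (1 - 1/K) * ‖A‖ := one_step K hK A _ hσ2
  set C := B - ((K : ℂ))⁻¹ • myToLp (fun p => B ((fun p : ℕ × ℕ => (p.1 + 2, p.2)) p))
      ((my_summable B).comp_injective hσ1) with hC
  have hCnorm : ‖C‖ ≥ (1 - 1/K) * ‖B‖ := one_step K hK B _ hσ1
  have hKfrac : (0:ℝ) ≤ 1 - 1/K := by
    rw [sub_nonneg]
    rw [div_le_one hKpos]; linarith
  have hfinal : ‖C‖ ≥ (1 - 1/K)^2 * ‖A‖ := by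
    have h1 : (1 - 1/K) * ‖B‖ ≥ (1 - 1/K) * ((1 - 1/K) * ‖A‖) :=
      mul_le_mul_of_nonneg_left hBnorm hKfrac
    nlinarith [hCnorm, h1]
  -- compute coercions
  have hBcoe : ∀ p : ℕ × ℕ, B p = a p.1 p.2 - a p.1 (p.2 + 2) / (K : ℂ) := by
    intro p
    simp only [hB, lp.coeFn_sub, lp.coeFn_smul, Pi.sub_apply, Pi.smul_apply,
      myToLp_coe, hA, smul_eq_mul]
    ring
  have hCcoe : ∀ p : ℕ × ℕ, C p = a p.1 p.2 - a p.1 (p.2 + 2) / (K : ℂ)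
      - a (p.1 + 2) p.2 / (K : ℂ) + a (p.1 + 2) (p.2 + 2) / (K : ℂ) ^ 2 := by
    intro p
    have h1 : C p = B p - (K:ℂ)⁻¹ * B (p.1 + 2, p.2) := by
      simp only [hC, lp.coeFn_sub, lp.coeFn_smul, Pi.sub_apply, Pi.smul_apply,
        myToLp_coe, smul_eq_mul]
    rw [h1, hBcoe p, hBcoe (p.1 + 2, p.2)]
    field_simp
    ring
  have hCn : ‖C‖ = Real.sqrt (∑' p : ℕ × ℕ,
      ‖a p.1 p.2 - a p.1 (p.2 + 2) / (K : ℂ) - a (p.1 + 2) p.2 / (K : ℂ)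
        + a (p.1 + 2) (p.2 + 2) / (K : ℂ) ^ 2‖ ^ 2) := by
    rw [my_norm]
    congr 1
    exact tsum_congr fun p => by rw [hCcoe p]
  have hAn : ‖A‖ = Real.sqrt (∑' p : ℕ × ℕ, ‖a p.1 p.2‖ ^ 2) := by
    rw [my_norm, myToLp_coe]
  rw [← hCn, ← hAn]
  exact hfinal
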